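/- arXiv:1509.05019 — 7 statements merged into one kernel-verified Lean document; each statement's English description precedes it below -/
import Mathlib

section
/- The sequence (y_n) given by y_n = x_{n+1}/x_n (with y_0 a fixed positive integer) consists of positive integers and is increasing, i.e., y_{n+1} ≥ y_n for all n ≥ 0. -/
theorem stmt2 (q : ℕ) (z x y : ℕ → ℕ) (hq : 0 < q)
    (hz : ∀ n, 1 ≤ n → 0 < z n) (hy0 : 0 < y 0)
    (hx1 : x 1 = q)
    (hrec : ∀ n, 1 ≤ n → x (n + 1) = x n * y (n - 1) * (x n * z n + 1))
    (hy : ∀ n, 1 ≤ n → y n = x (n + 1) / x n) :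
    (∀ n, 0 < y n) ∧ (∀ n, y n ≤ y (n + 1)) := by
  have key : ∀ n, 0 < x (n + 1) ∧ 0 < y n ∧
      y (n + 1) = y n * (x (n + 1) * z (n + 1) + 1) := by
    intro n
    induction n with
    | zero =>
      have hx1pos : 0 < x 1 := by omega
      refine ⟨hx1pos, hy0, ?_⟩
      have h := hrec 1 (by omega)
      have h2 := hy 1 (by omega)
      simp only [show (1:ℕ) - 1 = 0 from rfl] at h
      rw [h2, h, mul_assoc, Nat.mul_div_cancel_left _ hx1pos]
    | succ n ih =>
      obtain ⟨hxp, hyp, hye⟩ := ih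
      have hr := hrec (n + 1) (by omega)
      simp only [Nat.add_sub_cancel] at hr
      have hxp2 : 0 < x (n + 2) := by
        rw [hr]; positivity
      have hyp2 : 0 < y (n + 1) := by
        rw [hye]; positivity
      refine ⟨hxp2, hyp2, ?_⟩
      have hr2 := hrec (n + 2) (by omega)
      have h2 := hy (n + 2) (by omega)
      simp only [show n + 2 - 1 = n + 1 from rfl] at hr2
      rw [h2, hr2, mul_assoc, Nat.mul_div_cancel_left _ hxp2]
  constructor
  · intro n; exact (key n).2.1
  · intro n
    have ⟨hxp, hyp, hye⟩ := key n
    rw [hye]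
    exact Nat.le_mul_of_pos_right _ (by positivity)
end

section
/- If a strictly increasing sequence of positive integers (x_n) satisfies x_{n+1} * x_{n-1} = x_n^2 * (z_n * x_n + 1) for n ≥ 2 with all z_n ≥ 1, then x_{n+1}^2 > x_n^5 for all n ≥ 3. -/
theorem stmt5 (x z : ℕ → ℕ) (hpos : ∀ n, 0 < x n)
    (hmono : ∀ n, 1 ≤ n → x n < x (n + 1))
    (hz : ∀ n, 1 ≤ z n)
    (hrec : ∀ n, 2 ≤ n → x (n + 1) * x (n - 1) = x n ^ 2 * (z n * x n + 1)) :
    ∀ n, 3 ≤ n → x n ^ 5 < x (n + 1) ^ 2 := by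
  have key : ∀ n, 2 ≤ n → x n ^ 2 < x (n + 1) := by
    intro n hn
    obtain ⟨k, rfl⟩ : ∃ k, n = k + 1 := ⟨n - 1, by omega⟩
    have hr := hrec (k + 1) hn
    simp only [Nat.add_sub_cancel] at hr
    have hm := hmono k (by omega)
    have hp := hpos k
    have hz' := hz (k + 1)
    have h : x (k + 1 + 1) * x k > x (k + 1) ^ 2 * x k := by
      rw [hr]
      have : x (k + 1) ^ 2 * (z (k + 1) * x (k + 1) + 1) ≥ x (k + 1) ^ 2 * (x (k + 1) + 1) := by
        apply Nat.mul_le_mul_left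
        nlinarith
      nlinarith [hpos (k + 1)]
    exact lt_of_mul_lt_mul_right h (le_of_lt hp)
  intro n hn
  obtain ⟨k, rfl⟩ : ∃ k, n = k + 2 := ⟨n - 2, by omega⟩
  have h1 := key (k + 1) (by omega)
  have e1 : k + 1 + 1 = k + 2 := rfl
  rw [e1] at h1
  have hr := hrec (k + 2) (by omega)
  have e2 : k + 2 - 1 = k + 1 := rfl
  rw [e2] at hr
  have hp1 := hpos (k + 1)
  have hp2 := hpos (k + 2)
  have hz' := hz (k + 2)
  have h2 : x (k + 2) ^ 2 * (x (k + 2) + 1) ≤ x (k + 2 + 1) * x (k + 1) := by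
    rw [hr]
    apply Nat.mul_le_mul_left
    nlinarith
  have ha : x (k + 2) * x (k + 1) ^ 2 < (x (k + 2) + 1) ^ 2 := by nlinarith
  have h3 : x (k + 2) ^ 5 * x (k + 1) ^ 2 < x (k + 2 + 1) ^ 2 * x (k + 1) ^ 2 := by
    calc x (k + 2) ^ 5 * x (k + 1) ^ 2
        = x (k + 2) ^ 4 * (x (k + 2) * x (k + 1) ^ 2) := by ring
      _ < x (k + 2) ^ 4 * (x (k + 2) + 1) ^ 2 :=
          (Nat.mul_lt_mul_left (pow_pos hp2 4)).mpr ha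
      _ = (x (k + 2) ^ 2 * (x (k + 2) + 1)) ^ 2 := by ring
      _ ≤ (x (k + 2 + 1) * x (k + 1)) ^ 2 := Nat.pow_le_pow_left h2 2
      _ = x (k + 2 + 1) ^ 2 * x (k + 1) ^ 2 := by ring
  exact lt_of_mul_lt_mul_right h3 (Nat.zero_le _)
end

section
/- The number S = p/q + ∑_{j=2}^∞ 1/x_j, where (x_n) is defined by the non-autonomous recurrence x_{n+1} = x_n y_{n-1}(x_n z_n + 1) with x_1 = q, is irrational. -/
/-!
Multiplying `∑ 1 / x n` by `x m` turns the first `m + 1` terms into an integer, since every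
`x i` with `i ≤ m` divides `x m`, and leaves the tail `x m * ∑_{j > m} 1 / x j`, which is
positive and, because `x (j + 1) ≥ 2 * x j` and `x (m + 1) > x m ^ 2`, smaller than `2 / x m`.
If the sum were `a / b`, then `b` times this tail would be an integer strictly between `0` and `1`
as soon as `x m ≥ 2 * b`. From `n = 2` on, the recurrence supplies both `x n ∣ x (n + 1)` and
`x n ^ 2 < x (n + 1)`.
-/

open Finset

theorem irrational_of_forall_exists_approx {α : ℝ}
    (h : ∀ N : ℕ, 0 < N → ∃ (d : ℕ) (A : ℤ), 0 < d * α - A ∧ N * (d * α - A) < 1) :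
    Irrational α := by
  rintro ⟨r, rfl⟩
  obtain ⟨d, A, hpos, hlt⟩ := h r.den r.pos
  have hint : (r.den : ℝ) * (d * r - A) = ((d * r.num - r.den * A : ℤ) : ℝ) := by
    rw [Rat.cast_def]
    push_cast
    field_simp
  have hk0 : 0 < d * r.num - r.den * A :=
    Int.cast_pos.mp (hint ▸ mul_pos (by exact_mod_cast r.pos) hpos)
  have hk1 : d * r.num - r.den * A < 1 := by exact_mod_cast hint ▸ hlt
  omega

section GrowingSequence

variable {x : ℕ → ℕ}

theorem two_mul_le_of_sq_lt (hsq : ∀ n, x n ^ 2 < x (n + 1)) (n : ℕ) :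
    2 * x n ≤ x (n + 1) := by
  nlinarith [hsq n, sq_nonneg ((x n : ℤ) - 1)]

theorem strictMono_of_sq_lt (hsq : ∀ n, x n ^ 2 < x (n + 1)) : StrictMono x :=
  strictMono_nat_of_lt_succ fun n => (Nat.le_self_pow two_ne_zero _).trans_lt (hsq n)

theorem two_pow_mul_le_of_sq_lt (hsq : ∀ n, x n ^ 2 < x (n + 1)) (m j : ℕ) :
    2 ^ j * x m ≤ x (m + j) := by
  induction j with
  | zero => simp
  | succ j ih =>
    calc 2 ^ (j + 1) * x m = 2 * (2 ^ j * x m) := by ring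
      _ ≤ 2 * x (m + j) := by omega
      _ ≤ x (m + j + 1) := two_mul_le_of_sq_lt hsq _

theorem dvd_of_dvd_succ (hdvd : ∀ n, x n ∣ x (n + 1)) {i j : ℕ} (hij : i ≤ j) :
    x i ∣ x j := by
  induction j, hij using Nat.le_induction with
  | base => rfl
  | succ j _ ih => exact ih.trans (hdvd j)

variable (hx0 : 0 < x 0) (hsq : ∀ n, x n ^ 2 < x (n + 1))
include hx0 hsq

theorem pos_of_sq_lt (n : ℕ) : 0 < x n :=
  hx0.trans_le ((strictMono_of_sq_lt hsq).monotone n.zero_le)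

theorem one_div_le_of_sq_lt (m j : ℕ) :
    1 / (x (j + m) : ℝ) ≤ (1 / 2) ^ j * (1 / x m) := by
  have hxm : (0 : ℝ) < x m := by exact_mod_cast pos_of_sq_lt hx0 hsq m
  have : (2 : ℝ) ^ j * x m ≤ x (j + m) := by
    rw [add_comm]; exact_mod_cast two_pow_mul_le_of_sq_lt hsq m j
  calc 1 / (x (j + m) : ℝ) ≤ 1 / (2 ^ j * x m) := one_div_le_one_div_of_le (by positivity) this
    _ = (1 / 2) ^ j * (1 / x m) := by rw [one_div_pow]; ring

theorem summable_one_div_of_sq_lt : Summable fun n => 1 / (x n : ℝ) :=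
  Summable.of_nonneg_of_le (fun n => by positivity)
    (fun n => by simpa using one_div_le_of_sq_lt hx0 hsq 0 n)
    (summable_geometric_two.mul_right _)

theorem summable_one_div_add_of_sq_lt (m : ℕ) : Summable fun j => 1 / (x (j + m) : ℝ) :=
  (summable_nat_add_iff m).2 (summable_one_div_of_sq_lt hx0 hsq)

theorem tsum_one_div_add_pos_of_sq_lt (m : ℕ) : 0 < ∑' j, 1 / (x (j + m) : ℝ) := by
  refine (summable_one_div_add_of_sq_lt hx0 hsq m).tsum_pos (fun j => by positivity) 0 ?_
  have := pos_of_sq_lt hx0 hsq (0 + m)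
  positivity

theorem tsum_one_div_add_le_of_sq_lt (m : ℕ) : ∑' j, 1 / (x (j + m) : ℝ) ≤ 2 / x m :=
  calc ∑' j, 1 / (x (j + m) : ℝ) ≤ ∑' j : ℕ, (1 / 2) ^ j * (1 / (x m : ℝ)) :=
        (summable_one_div_add_of_sq_lt hx0 hsq m).tsum_le_tsum (one_div_le_of_sq_lt hx0 hsq m)
          (summable_geometric_two.mul_right _)
    _ = 2 / x m := by rw [tsum_mul_right, tsum_geometric_two]; ring

theorem mul_tsum_one_div_add_succ_lt_of_sq_lt (m : ℕ) :
    (x m : ℝ) * ∑' j, 1 / (x (j + (m + 1)) : ℝ) < 2 / x m := by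
  have hxm : (0 : ℝ) < x m := by exact_mod_cast pos_of_sq_lt hx0 hsq m
  have hsq' : (x m : ℝ) ^ 2 < x (m + 1) := by exact_mod_cast hsq m
  calc (x m : ℝ) * ∑' j, 1 / (x (j + (m + 1)) : ℝ) ≤ x m * (2 / x (m + 1)) :=
        mul_le_mul_of_nonneg_left (tsum_one_div_add_le_of_sq_lt hx0 hsq _) hxm.le
    _ < x m * (2 / x m ^ 2) := by gcongr
    _ = 2 / x m := by field_simp

theorem natCast_mul_sum_range_one_div (hdvd : ∀ n, x n ∣ x (n + 1)) (m : ℕ) :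
    (x m : ℝ) * ∑ i ∈ range (m + 1), 1 / (x i : ℝ) =
      ((∑ i ∈ range (m + 1), x m / x i : ℕ) : ℝ) := by
  rw [mul_sum, Nat.cast_sum]
  refine sum_congr rfl fun i hi => ?_
  have hxi : (x i : ℝ) ≠ 0 := by exact_mod_cast (pos_of_sq_lt hx0 hsq i).ne'
  rw [Nat.cast_div (dvd_of_dvd_succ hdvd (Nat.lt_succ_iff.mp (mem_range.mp hi))) hxi]
  ring

theorem irrational_tsum_one_div_of_sq_lt (hdvd : ∀ n, x n ∣ x (n + 1)) :
    Irrational (∑' n, 1 / (x n : ℝ)) := by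
  refine irrational_of_forall_exists_approx fun N _ => ?_
  set m := 2 * N
  refine ⟨x m, ((∑ i ∈ range (m + 1), x m / x i : ℕ) : ℤ), ?_, ?_⟩ <;>
    rw [Int.cast_natCast, ← natCast_mul_sum_range_one_div hx0 hsq hdvd, ← mul_sub,
      ← (summable_one_div_of_sq_lt hx0 hsq).sum_add_tsum_nat_add (m + 1), add_sub_cancel_left]
  · have := pos_of_sq_lt hx0 hsq m
    have := tsum_one_div_add_pos_of_sq_lt hx0 hsq (m + 1)
    positivity
  · have hm : (m : ℝ) ≤ x m := by exact_mod_cast (strictMono_of_sq_lt hsq).id_le m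
    have hxm : (0 : ℝ) < x m := by exact_mod_cast pos_of_sq_lt hx0 hsq m
    calc (N : ℝ) * (x m * ∑' j, 1 / (x (j + (m + 1)) : ℝ)) < N * (2 / x m) := by
          gcongr; exact mul_tsum_one_div_add_succ_lt_of_sq_lt hx0 hsq m
      _ ≤ 1 := by
          rw [mul_div_assoc', div_le_one hxm]; push_cast [m] at hm; linarith

end GrowingSequence

theorem sq_lt_mul_mul_mul_add_one {a b c : ℕ} (ha : 0 < a) (hb : 0 < b) (hc : 0 < c) :
    a ^ 2 < a * b * (a * c + 1) :=
  calc a ^ 2 < a * 1 * (a * 1 + 1) := by nlinarith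
    _ ≤ a * b * (a * c + 1) :=
      Nat.mul_le_mul (Nat.mul_le_mul_left a hb) (Nat.add_le_add_right (Nat.mul_le_mul_left a hc) 1)

theorem pos_of_recurrence (z x y : ℕ → ℕ) (hx1 : 0 < x 1) (hy0 : 0 < y 0)
    (hxrec : ∀ n, 1 ≤ n → x (n + 1) = x n * y (n - 1) * (x n * z n + 1))
    (hy : ∀ n, 1 ≤ n → y n = x (n + 1) / x n) (n : ℕ) : 0 < x (n + 1) ∧ 0 < y n := by
  induction n with
  | zero => exact ⟨hx1, hy0⟩
  | succ k ih =>
    have hrec : x (k + 2) = x (k + 1) * y k * (x (k + 1) * z (k + 1) + 1) :=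
      hxrec (k + 1) (by omega)
    have hle : x (k + 1) ≤ x (k + 2) := by
      rw [hrec, mul_assoc]
      exact Nat.le_mul_of_pos_right _ (Nat.mul_pos ih.2 (by omega))
    exact ⟨ih.1.trans_le hle, hy (k + 1) (by omega) ▸ Nat.div_pos hle ih.1⟩

theorem stmt11_general (p : ℤ) (q : ℕ) (z x y : ℕ → ℕ)
    (hq : 0 < q)
    (hz : ∀ n, 1 ≤ n → 0 < z n) (hy0 : 0 < y 0)
    (hx1 : x 1 = q)
    (hxrec : ∀ n, 1 ≤ n → x (n + 1) = x n * y (n - 1) * (x n * z n + 1))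
    (hy : ∀ n, 1 ≤ n → y n = x (n + 1) / x n) :
    Irrational ((p : ℝ) / q + ∑' j : ℕ, (1 : ℝ) / x (j + 2)) := by
  have hpos := pos_of_recurrence z x y (hx1 ▸ hq) hy0 hxrec hy
  have hrec (n : ℕ) : x (n + 3) = x (n + 2) * y (n + 1) * (x (n + 2) * z (n + 2) + 1) :=
    hxrec (n + 2) (by omega)
  have hsq (n : ℕ) : x (n + 2) ^ 2 < x (n + 2 + 1) := by
    rw [hrec]
    exact sq_lt_mul_mul_mul_add_one (hpos (n + 1)).1 (hpos (n + 1)).2 (hz (n + 2) (by omega))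
  have hdvd (n : ℕ) : x (n + 2) ∣ x (n + 2 + 1) := by
    rw [hrec, mul_assoc]; exact dvd_mul_right _ _
  have hS := irrational_tsum_one_div_of_sq_lt (x := fun n => x (n + 2)) (hpos 1).1 hsq hdvd
  simpa using (irrational_ratCast_add_iff (q := (p / q : ℚ))).2 hS

theorem stmt11 (p : ℤ) (q : ℕ) (z x y : ℕ → ℕ)
    (hq : 0 < q) (hcop : Int.gcd p q = 1)
    (hz : ∀ n, 1 ≤ n → 0 < z n) (hy0 : 0 < y 0)
    (hx1 : x 1 = q)
    (hxrec : ∀ n, 1 ≤ n → x (n + 1) = x n * y (n - 1) * (x n * z n + 1))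
    (hy : ∀ n, 1 ≤ n → y n = x (n + 1) / x n) :
    Irrational ((p : ℝ) / q + ∑' j : ℕ, (1 : ℝ) / x (j + 2)) :=
  stmt11_general p q z x y hq hz hy0 hx1 hxrec hy
end

section
/- For the sequence defined by x_0 = x_1 = 1 and x_{n+2} x_n = x_{n+1}^2 (x_{n+1} + 1), every term x_n is a positive integer and x_n divides x_{n+1} for all n ≥ 0. -/
theorem stmt14 (x : ℕ → ℚ) (h0 : x 0 = 1) (h1 : x 1 = 1)
    (hrec : ∀ n, x (n + 2) * x n = x (n + 1) ^ 2 * (x (n + 1) + 1)) :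
    ∀ n, (∃ m : ℕ, 0 < m ∧ x n = m) ∧ ∃ d : ℤ, x (n + 1) = d * x n := by
  have key : ∀ n, (∃ m : ℕ, 0 < m ∧ x n = m) ∧ (∃ k : ℕ, 0 < k ∧ x (n + 1) = k) ∧
      ∃ d : ℤ, x (n + 1) = d * x n := by
    intro n
    induction n with
    | zero =>
      exact ⟨⟨1, one_pos, by simp [h0]⟩, ⟨1, one_pos, by simp [h1]⟩, 1, by simp [h0, h1]⟩
    | succ n ih =>
      obtain ⟨⟨m, hm, hxm⟩, ⟨k, hk, hxk⟩, d, hd⟩ := ih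
      have hxn : x n ≠ 0 := by
        rw [hxm]
        exact_mod_cast Nat.cast_ne_zero.mpr hm.ne'
      have hk' : (d : ℚ) * x n = k := by rw [← hd, hxk]
      have hx2 : x (n + 2) = (d : ℚ) * k * (k + 1) := by
        have h := hrec n
        rw [hd] at h
        have : x (n + 2) * x n = ((d : ℚ) * k * (k + 1)) * x n := by
          rw [h]
          linear_combination ((d:ℚ) * x n) * ((d:ℚ) * x n + k + 1) * hk'
        exact mul_right_cancel₀ hxn this
      have hdm : (d : ℚ) * m = k := by rw [← hxm, ← hd, hxk]
      have hdpos : 0 < d := by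
        by_contra hle
        push_neg at hle
        have h1' : (d : ℚ) ≤ 0 := by exact_mod_cast hle
        have h2' : (0:ℚ) < m := by exact_mod_cast hm
        have h3' : (0:ℚ) < k := by exact_mod_cast hk
        nlinarith
      refine ⟨⟨k, hk, hxk⟩, ⟨d.toNat * k * (k + 1), ?_, ?_⟩, d * (k + 1), ?_⟩
      · have : 0 < d.toNat := by omega
        positivity
      · have hcast : ((d.toNat : ℕ) : ℚ) = (d : ℚ) := by
          exact_mod_cast congrArg (Int.cast : ℤ → ℚ) (Int.toNat_of_nonneg hdpos.le)
        rw [hx2]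
        push_cast [hcast]
        ring
      · rw [hx2, hxk]
        push_cast
        ring
  intro n
  exact ⟨(key n).1, (key n).2.2⟩
end

section
/- For the sequence x_0 = x_1 = 1, x_{n+2} x_n = x_{n+1}^2(x_{n+1}+1), the partial sum ∑_{j=1}^n 1/x_j equals the continued fraction [x_0; y_0, x_1, y_1, ..., y_{n-2}, x_{n-1}] where y_j = x_{j+1}/x_j. -/
/-- Value of the finite continued fraction [a₀; a₁, …, aₙ] given as a list. -/
def cfVal : List ℤ → ℚ
  | [] => 0
  | [a] => (a : ℚ)
  | a :: l => (a : ℚ) + 1 / cfVal l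

/-- Continuant of a list of integers (numerator of the continued fraction). -/
def cK : List ℤ → ℚ
  | [] => 1
  | [a] => (a : ℚ)
  | a :: b :: t => (a : ℚ) * cK (b :: t) + cK t

lemma cK_nil : cK [] = 1 := rfl
lemma cK_singleton (a : ℤ) : cK [a] = (a : ℚ) := rfl
lemma cK_cons_cons (a b : ℤ) (t : List ℤ) :
    cK (a :: b :: t) = (a : ℚ) * cK (b :: t) + cK t := rfl

lemma cK_ge_one : ∀ l : List ℤ, (∀ a ∈ l, 1 ≤ a) → (1 : ℚ) ≤ cK l := by
  intro l
  induction l using cK.induct with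
  | case1 => simp [cK]
  | case2 a => intro h; have := h a (by simp); simp [cK]; exact_mod_cast this
  | case3 a b t ih1 ih2 =>
    intro h
    have ha : (1 : ℚ) ≤ (a : ℚ) := by exact_mod_cast h a (by simp)
    have h1 := ih1 (fun c hc => h c (by simp [hc]))
    have h2 := ih2 (fun c hc => h c (by simp [hc]))
    rw [cK_cons_cons]
    nlinarith

lemma cK_append : ∀ (l : List ℤ), l ≠ [] → ∀ (a : ℤ),
    cK (l ++ [a]) = (a : ℚ) * cK l + cK l.dropLast := by
  intro l
  induction l using cK.induct with
  | case1 => intro h; exact absurd rfl h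
  | case2 b => intro _ a; simp [cK_cons_cons, cK_singleton, cK_nil]; ring
  | case3 b c t ih1 ih2 =>
    intro _ a
    match t with
    | [] =>
      show cK [b, c, a] = _
      simp [cK_cons_cons, cK_singleton, cK_nil]; ring
    | d :: t' =>
      have e1 : (b :: c :: d :: t') ++ [a] = b :: ((c :: d :: t') ++ [a]) := rfl
      have e2 : (c :: d :: t') ++ [a] = c :: ((d :: t') ++ [a]) := rfl
      rw [e1, e2, cK_cons_cons, ← e2, ih1 (by simp) a, ih2 (by simp) a,
        show (b :: c :: d :: t').dropLast = b :: c :: (d :: t').dropLast from rfl,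
        show (c :: d :: t').dropLast = c :: (d :: t').dropLast from rfl,
        cK_cons_cons b c, cK_cons_cons c]
      rcases t' with _ | ⟨e, t''⟩
      · simp [cK_cons_cons, cK_singleton, cK_nil]; ring
      · rw [show (d :: e :: t'').dropLast = d :: (e :: t'').dropLast from rfl]
        simp only [cK_cons_cons]
        ring

lemma cfVal_eq_cK : ∀ l : List ℤ, l ≠ [] → (∀ a ∈ l, 1 ≤ a) →
    cfVal l = cK l / cK l.tail := by
  intro l
  induction l using cK.induct with
  | case1 => intro h; exact absurd rfl h
  | case2 a => intro _ _; simp [cfVal, cK_singleton, cK_nil]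
  | case3 a b t ih1 _ =>
    intro _ h
    have hpos : (0 : ℚ) < cK (b :: t) :=
      lt_of_lt_of_le one_pos (cK_ge_one _ (fun c hc => h c (by simp [hc])))
    have hpos2 : (0 : ℚ) < cK t :=
      lt_of_lt_of_le one_pos (cK_ge_one _ (fun c hc => h c (by simp [hc])))
    have e : cfVal (a :: b :: t) = (a : ℚ) + 1 / cfVal (b :: t) := rfl
    rw [e, ih1 (by simp) (fun c hc => h c (by simp [hc]))]
    show _ = cK (a :: b :: t) / cK (b :: t)
    rw [cK_cons_cons]
    rw [show (b :: t).tail = t from rfl]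
    field_simp

/-- Auxiliary sequence: `zS x n = ∏_{m ≤ n-1} (x (m+1) + 1)`, the ratio sequence. -/
def zS (x : ℕ → ℕ) : ℕ → ℕ
  | 0 => 1
  | n + 1 => zS x n * (x (n + 1) + 1)

lemma zS_pos (x : ℕ → ℕ) : ∀ n, 0 < zS x n := by
  intro n
  induction n with
  | zero => simp [zS]
  | succ n ih => simp [zS]; positivity

lemma x_mul (x : ℕ → ℕ) (h0 : x 0 = 1) (h1 : x 1 = 1)
    (hrec : ∀ n, x (n + 2) * x n = x (n + 1) ^ 2 * (x (n + 1) + 1)) :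
    ∀ n, 0 < x n ∧ x (n + 1) = x n * zS x n := by
  intro n
  induction n with
  | zero => simp [h0, h1, zS]
  | succ n ih =>
    obtain ⟨hp, hx⟩ := ih
    have hp1 : 0 < x (n + 1) := by rw [hx]; exact Nat.mul_pos hp (zS_pos x n)
    refine ⟨hp1, ?_⟩
    have e : x (n + 1) ^ 2 = x n * zS x n * x (n + 1) := by
      rw [sq]; nth_rewrite 1 [hx]; ring
    have h2 : x (n + 2) * x n = (x (n + 1) * zS x (n + 1)) * x n := by
      have hz : zS x (n + 1) = zS x n * (x (n + 1) + 1) := rfl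
      rw [hrec n, e, hz]
      ring
    exact Nat.eq_of_mul_eq_mul_right hp h2

lemma main_claim (x y : ℕ → ℕ)
    (hxpos : ∀ m, 0 < x m) (hypos : ∀ m, 0 < y m)
    (hx0 : x 0 = 1) (hx1 : x 1 = 1) (hy0 : y 0 = 1)
    (hxy : ∀ m, x (m + 1) = x m * y m)
    (hyr : ∀ m, y (m + 1) = y m * (x (m + 1) + 1)) :
    ∀ k, 1 ≤ k →
      (cK ((x 0 : ℤ) :: (List.range k).flatMap (fun j => [(y j : ℤ), (x (j + 1) : ℤ)]))
         = (x (k + 1) : ℚ) * (∑ j ∈ Finset.Icc 1 (k + 1), (1 : ℚ) / (x j : ℚ)))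
      ∧ (cK ((List.range k).flatMap (fun j => [(y j : ℤ), (x (j + 1) : ℤ)])) = (x (k + 1) : ℚ))
      ∧ (cK (((x 0 : ℤ) :: (List.range k).flatMap (fun j => [(y j : ℤ), (x (j + 1) : ℤ)])).dropLast)
         = (∑ j ∈ Finset.Icc 1 k, (1 : ℚ) / (x j : ℚ)) * ((y k : ℚ) - 1) + 1 / (x k : ℚ))
      ∧ (cK (((List.range k).flatMap (fun j => [(y j : ℤ), (x (j + 1) : ℤ)])).dropLast)
         = (y k : ℚ) - 1) := by
  have hX : ∀ m, (x m : ℚ) ≠ 0 := fun m => Nat.cast_ne_zero.mpr (hxpos m).ne'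
  have hY : ∀ m, (y m : ℚ) ≠ 0 := fun m => Nat.cast_ne_zero.mpr (hypos m).ne'
  intro k hk
  induction k, hk using Nat.le_induction with
  | base =>
    have hy1 : y 1 = 2 := by rw [hyr 0, hy0, hx1]
    have hx2 : x 2 = 2 := by rw [hxy 1, hx1, hy1]
    have hIcc1 : Finset.Icc 1 1 = {1} := rfl
    have hIcc2 : Finset.Icc 1 2 = {1, 2} := rfl
    have hr : List.range 1 = [0] := rfl
    simp [hr, cK_cons_cons, cK_singleton, cK_nil, hIcc1, hIcc2,
      hx0, hx1, hy0, hy1, hx2]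
    norm_num
  | succ k hk ih =>
    obtain ⟨A, B, C, D⟩ := ih
    have hflat : (List.range (k + 1)).flatMap (fun j => [(y j : ℤ), (x (j + 1) : ℤ)])
        = (List.range k).flatMap (fun j => [(y j : ℤ), (x (j + 1) : ℤ)])
          ++ [(y k : ℤ), (x (k + 1) : ℤ)] := by
      rw [List.range_succ, List.flatMap_append]; simp
    set lf := (List.range k).flatMap (fun j => [(y j : ℤ), (x (j + 1) : ℤ)]) with hlf
    have hne : lf ≠ [] := by
      obtain ⟨k', rfl⟩ : ∃ k', k = k' + 1 := ⟨k - 1, by omega⟩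
      rw [hlf, List.range_succ, List.flatMap_append]
      simp
    have hb : (x (k + 1) : ℚ) = (x k : ℚ) * (y k : ℚ) := by exact_mod_cast hxy k
    have hc : (x (k + 2) : ℚ) = (x (k + 1) : ℚ) * (y (k + 1) : ℚ) := by
      exact_mod_cast hxy (k + 1)
    have hv : (y (k + 1) : ℚ) = (y k : ℚ) * ((x (k + 1) : ℚ) + 1) := by
      exact_mod_cast hyr k
    have hS1 : (∑ j ∈ Finset.Icc 1 (k + 1), (1 : ℚ) / (x j : ℚ))
        = (∑ j ∈ Finset.Icc 1 k, (1 : ℚ) / (x j : ℚ)) + 1 / (x (k + 1) : ℚ) :=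
      Finset.sum_Icc_succ_top (by omega) _
    have hS2 : (∑ j ∈ Finset.Icc 1 (k + 2), (1 : ℚ) / (x j : ℚ))
        = (∑ j ∈ Finset.Icc 1 (k + 1), (1 : ℚ) / (x j : ℚ)) + 1 / (x (k + 2) : ℚ) :=
      Finset.sum_Icc_succ_top (by omega) _
    have e1 : cK (lf ++ [(y k : ℤ)]) = (y k : ℚ) * cK lf + cK lf.dropLast :=
      cK_append lf hne _
    have e2 : cK ((lf ++ [(y k : ℤ)]) ++ [(x (k + 1) : ℤ)])
        = (x (k + 1) : ℚ) * cK (lf ++ [(y k : ℤ)]) + cK lf := by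
      rw [cK_append _ (by simp) _, List.dropLast_concat]; push_cast; ring
    have e3 : cK (((x 0 : ℤ) :: lf) ++ [(y k : ℤ)])
        = (y k : ℚ) * cK ((x 0 : ℤ) :: lf) + cK ((x 0 : ℤ) :: lf).dropLast :=
      cK_append _ (by simp) _
    have e4 : cK ((((x 0 : ℤ) :: lf) ++ [(y k : ℤ)]) ++ [(x (k + 1) : ℤ)])
        = (x (k + 1) : ℚ) * cK (((x 0 : ℤ) :: lf) ++ [(y k : ℤ)]) + cK ((x 0 : ℤ) :: lf) := by
      rw [cK_append _ (by simp) _, List.dropLast_concat]; push_cast; ring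
    have hsplit : (x 0 : ℤ) :: (lf ++ [(y k : ℤ), (x (k + 1) : ℤ)])
        = (((x 0 : ℤ) :: lf) ++ [(y k : ℤ)]) ++ [(x (k + 1) : ℤ)] := by simp
    have hsplit2 : lf ++ [(y k : ℤ), (x (k + 1) : ℤ)]
        = (lf ++ [(y k : ℤ)]) ++ [(x (k + 1) : ℤ)] := by simp
    have hkk : k + 1 + 1 = k + 2 := rfl
    refine ⟨?_, ?_, ?_, ?_⟩
    · rw [hkk, hflat, hsplit, e4, e3, A, C, hS2, hS1, hc, hv, hb]
      have h1 := hX k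
      have h2 := hX (k + 1)
      have h3 := hY k
      field_simp
      ring
    · rw [hkk, hflat, hsplit2, e2, e1, B, D, hc, hv]
      ring
    · rw [hflat, hsplit, List.dropLast_concat, e3, A, C, hS1, hv, hb]
      have h1 := hX k
      have h2 := hX (k + 1)
      have h3 := hY k
      field_simp
      ring
    · rw [hflat, hsplit2, List.dropLast_concat, e1, B, D, hv]
      ring

theorem stmt15 (x y : ℕ → ℕ) (h0 : x 0 = 1) (h1 : x 1 = 1)
    (hrec : ∀ n, x (n + 2) * x n = x (n + 1) ^ 2 * (x (n + 1) + 1))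
    (hy : ∀ j, y j = x (j + 1) / x j) :
    ∀ n, 1 ≤ n →
      (∑ j ∈ Finset.Icc 1 n, (1 : ℚ) / x j)
        = cfVal ((x 0 : ℤ) ::
            (List.range (n - 1)).flatMap (fun j => [(y j : ℤ), (x (j + 1) : ℤ)])) := by
  have hxz := x_mul x h0 h1 hrec
  have hxpos : ∀ m, 0 < x m := fun m => (hxz m).1
  have hyz : ∀ j, y j = zS x j := fun j => by
    rw [hy j, (hxz j).2, Nat.mul_div_cancel_left _ (hxpos j)]
  have hypos : ∀ m, 0 < y m := fun m => (hyz m) ▸ zS_pos x m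
  have hy0 : y 0 = 1 := by rw [hyz]; rfl
  have hxy : ∀ m, x (m + 1) = x m * y m := fun m => by rw [hyz]; exact (hxz m).2
  have hyr : ∀ m, y (m + 1) = y m * (x (m + 1) + 1) := fun m => by
    rw [hyz, hyz]; rfl
  intro n hn
  match n, hn with
  | 1, _ =>
    have : Finset.Icc 1 1 = {1} := rfl
    simp [this, h0, h1, cfVal]
  | (m + 2), _ =>
    obtain ⟨A, B, _, _⟩ :=
      main_claim x y hxpos hypos h0 h1 hy0 hxy hyr (m + 1) (by omega)
    have hmem : ∀ a ∈ (x 0 : ℤ) ::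
        (List.range (m + 1)).flatMap (fun j => [(y j : ℤ), (x (j + 1) : ℤ)]), 1 ≤ a := by
      intro a ha
      simp only [List.mem_cons, List.mem_flatMap, List.mem_range] at ha
      rcases ha with rfl | ⟨j, _, hj⟩
      · exact_mod_cast hxpos 0
      · simp only [List.mem_cons, List.mem_singleton, List.not_mem_nil, or_false] at hj
        rcases hj with rfl | rfl
        · exact_mod_cast hypos j
        · exact_mod_cast hxpos (j + 1)
    have hred : m + 2 - 1 = m + 1 := rfl
    rw [hred, cfVal_eq_cK _ (by simp) hmem]
    rw [show ((x 0 : ℤ) ::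
        (List.range (m + 1)).flatMap (fun j => [(y j : ℤ), (x (j + 1) : ℤ)])).tail
        = (List.range (m + 1)).flatMap (fun j => [(y j : ℤ), (x (j + 1) : ℤ)]) from rfl]
    rw [A, B, mul_div_cancel_left₀ _ (Nat.cast_ne_zero.mpr (hxpos (m + 2)).ne')]
end

section
/- If F(x) ∈ ℤ[x] has nonnegative integer coefficients with F(0) = 1, then the sequence defined by x_0 = x_1 = 1 and x_{n+1} x_{n-1} = x_n^2 F(x_n) consists of positive integers with x_n ∣ x_{n+1} for all n. -/
theorem stmt17 (F : Polynomial ℤ) (hcoeff : ∀ i, 0 ≤ F.coeff i) (hF0 : F.coeff 0 = 1)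
    (x : ℕ → ℚ) (h0 : x 0 = 1) (h1 : x 1 = 1)
    (hrec : ∀ n, 1 ≤ n → x (n + 1) * x (n - 1) = x n ^ 2 * Polynomial.aeval (x n) F) :
    ∀ n, (∃ m : ℕ, 0 < m ∧ x n = m) ∧ ∃ d : ℤ, x (n + 1) = d * x n := by
  have heval : ∀ k : ℤ, 0 ≤ k → 1 ≤ F.eval k := by
    intro k hk
    rw [Polynomial.eval_eq_sum_range]
    calc (1:ℤ) = F.coeff 0 * k ^ 0 := by simp [hF0]
    _ ≤ ∑ i ∈ Finset.range (F.natDegree + 1), F.coeff i * k ^ i :=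
      Finset.single_le_sum (fun i _ => mul_nonneg (hcoeff i) (pow_nonneg hk i)) (by simp)
  have key : ∀ n, ∃ a b : ℤ, 0 < a ∧ 0 < b ∧ x n = a ∧ x (n + 1) = b * x n := by
    intro n
    induction n with
    | zero => exact ⟨1, 1, one_pos, one_pos, by simp [h0], by simp [h0, h1]⟩
    | succ n ih =>
      obtain ⟨a, b, ha, hb, hxa, hxb⟩ := ih
      have hba : (0:ℤ) < b * a := mul_pos hb ha
      have hxn1 : x (n+1) = ((b * a : ℤ) : ℚ) := by rw [hxb, hxa]; push_cast; ring
      have he : 1 ≤ F.eval (b * a) := heval _ hba.le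
      have haev : Polynomial.aeval (x (n+1)) F = ((F.eval (b*a) : ℤ) : ℚ) := by
        rw [hxn1]
        rw [show ((b*a : ℤ) : ℚ) = algebraMap ℤ ℚ (b*a) by simp]
        rw [Polynomial.aeval_algebraMap_apply]
        simp
      have hxne : x n ≠ 0 := by
        rw [hxa]
        exact_mod_cast ha.ne'
      refine ⟨b * a, b * F.eval (b*a), hba, mul_pos hb (by linarith), hxn1, ?_⟩
      have hr := hrec (n+1) (by omega)
      simp only [Nat.add_sub_cancel] at hr
      have : x (n+1+1) * x n = (((b * F.eval (b*a) : ℤ) : ℚ) * x (n+1)) * x n := by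
        rw [hr, haev, hxb]; push_cast; ring
      exact mul_right_cancel₀ hxne this
  intro n
  obtain ⟨a, b, ha, hb, hxa, hxb⟩ := key n
  refine ⟨⟨a.toNat, by omega, ?_⟩, b, hxb⟩
  rw [hxa]
  norm_cast
  omega
end

section
/- If a sequence of positive integers satisfies x_{n+1} > x_n^{5/2} (i.e., x_{n+1}^2 > x_n^5) for all n ≥ N with x_N ≥ 2, then for every ε > 0 there exists M such that for all n ≥ M, ∑_{j=n+1}^∞ 1/x_j < x_n^{-(5/2 - ε)}. -/
theorem stmt18 (x : ℕ → ℕ) (N : ℕ) (hN : 2 ≤ x N)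
    (hgrow : ∀ n, N ≤ n → x n ^ 5 < x (n + 1) ^ 2) :
    ∀ ε : ℝ, 0 < ε → ∃ M : ℕ, ∀ n, M ≤ n →
      (∑' j : ℕ, (1 : ℝ) / x (n + 1 + j)) < (x n : ℝ) ^ (-(5 / 2 - ε)) := by
  have h2 : ∀ n, N ≤ n → 2 ≤ x n := by
    intro n hn
    induction n, hn using Nat.le_induction with
    | base => exact hN
    | succ n hn ih =>
      have h1 : 1 < x (n+1) ^ 2 :=
        lt_trans (lt_of_lt_of_le (by omega : 1 < x n) (Nat.le_self_pow (by norm_num) _))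
          (hgrow n hn)
      nlinarith [h1]
  have hsq : ∀ n, N ≤ n → x n ^ 2 < x (n+1) := by
    intro n hn
    have hlt : x n ^ (2*2) < x (n+1) ^ 2 :=
      lt_trans (Nat.pow_lt_pow_right (by have := h2 n hn; omega) (by omega)) (hgrow n hn)
    exact lt_of_pow_lt_pow_left₀ 2 (Nat.zero_le _) (by rwa [← pow_mul])
  have hgeo : ∀ n, N ≤ n → ∀ j, 2 ^ j * x (n+1) ≤ x (n+1+j) := by
    intro n hn j
    induction j with
    | zero => simp
    | succ j ih =>
      have h' : x (n+1+j) ^ 2 < x (n+1+j+1) := hsq _ (by omega)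
      have hx : 2 ≤ x (n+1+j) := h2 _ (by omega)
      calc 2^(j+1) * x (n+1) = 2 * (2^j * x (n+1)) := by ring
        _ ≤ 2 * x (n+1+j) := Nat.mul_le_mul_left 2 ih
        _ ≤ x (n+1+j) * x (n+1+j) := Nat.mul_le_mul_right _ hx
        _ = x (n+1+j)^2 := (sq _).symm
        _ ≤ x (n+1+j+1) := h'.le
  have hpow2 : ∀ k, 2 ^ k ≤ x (N + k) := by
    intro k
    induction k with
    | zero => simpa using (by omega : 1 ≤ x N)
    | succ k ih =>
      have h' := hsq (N+k) (Nat.le_add_right _ _)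
      have hx := h2 (N+k) (Nat.le_add_right _ _)
      calc 2^(k+1) = 2 * 2^k := by ring
        _ ≤ x (N+k) * x (N+k) := Nat.mul_le_mul hx ih
        _ = x (N+k)^2 := (sq _).symm
        _ ≤ x (N+k+1) := h'.le
  intro ε hε
  set K := ⌈1/ε⌉₊ with hK
  refine ⟨N + K, fun n hn => ?_⟩
  have hnN : N ≤ n := by omega
  have ha2 : (2:ℝ) ≤ (x n : ℝ) := by exact_mod_cast h2 n hnN
  have ha0 : (0:ℝ) < (x n : ℝ) := by linarith
  have hb2 : (2:ℝ) ≤ (x (n+1) : ℝ) := by exact_mod_cast h2 (n+1) (by omega)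
  have hb0 : (0:ℝ) < (x (n+1) : ℝ) := by linarith
  have hle : ∀ j : ℕ, (1:ℝ) / x (n+1+j) ≤ (1/2)^j * (1 / x (n+1)) := by
    intro j
    have hg := hgeo n hnN j
    have hc : (0:ℝ) < 2^j * (x (n+1):ℝ) := by positivity
    have h1 : (1:ℝ) / x (n+1+j) ≤ 1 / (2^j * (x (n+1):ℝ)) := by
      apply one_div_le_one_div_of_le hc
      exact_mod_cast hg
    calc (1:ℝ) / x (n+1+j) ≤ 1 / (2^j * (x (n+1):ℝ)) := h1
      _ = (1/2)^j * (1 / x (n+1)) := by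
          rw [div_pow, one_pow, div_mul_div_comm, one_mul]
  have hnng : ∀ j : ℕ, (0:ℝ) ≤ (1:ℝ) / x (n+1+j) := fun j => by positivity
  have hgs : Summable (fun j : ℕ => ((1:ℝ)/2)^j * (1 / (x (n+1):ℝ))) :=
    (summable_geometric_of_lt_one (by norm_num) (by norm_num)).mul_right _
  have hfs : Summable (fun j : ℕ => (1:ℝ) / x (n+1+j)) :=
    Summable.of_nonneg_of_le hnng hle hgs
  have htsum : (∑' j : ℕ, (1:ℝ) / x (n+1+j)) ≤ 2 / (x (n+1):ℝ) := by
    have h := Summable.tsum_le_tsum hle hfs hgs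
    rw [tsum_mul_right, tsum_geometric_of_lt_one (by norm_num) (by norm_num)] at h
    calc (∑' j : ℕ, (1:ℝ) / x (n+1+j)) ≤ (1 - 1/2 : ℝ)⁻¹ * (1 / x (n+1)) := h
      _ = 2 / (x (n+1):ℝ) := by
          rw [show ((1:ℝ) - 1/2)⁻¹ = 2 by norm_num, mul_one_div]
  set a : ℝ := (x n : ℝ) with ha
  have h52 : a ^ ((5:ℝ)/2) < (x (n+1) : ℝ) := by
    have h5 : a ^ (5:ℕ) < (x (n+1):ℝ) ^ (2:ℕ) := by
      rw [ha]; exact_mod_cast hgrow n hnN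
    have hsq' : (a ^ ((5:ℝ)/2)) ^ (2:ℕ) = a ^ (5:ℕ) := by
      rw [← Real.rpow_natCast (a ^ ((5:ℝ)/2)) 2, ← Real.rpow_mul ha0.le,
        ← Real.rpow_natCast a 5]
      norm_num
    refine lt_of_pow_lt_pow_left₀ 2 (by positivity) ?_
    rw [hsq']; exact h5
  have hstep : 2 / (x (n+1):ℝ) < 2 / a ^ ((5:ℝ)/2) :=
    div_lt_div_of_pos_left (by norm_num) (Real.rpow_pos_of_pos ha0 _) h52
  have hKε : 1 ≤ (K:ℝ) * ε := by
    have h1 : (1:ℝ)/ε ≤ K := Nat.le_ceil _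
    calc (1:ℝ) = (1/ε) * ε := by field_simp
      _ ≤ K * ε := mul_le_mul_of_nonneg_right h1 hε.le
  have haK : (2:ℝ)^(K:ℕ) ≤ a := by
    have h1 : (2:ℕ)^(n - N) ≤ x n := by
      have := hpow2 (n - N)
      rwa [Nat.add_sub_cancel' hnN] at this
    have h2' : (2:ℕ)^K ≤ 2^(n-N) := Nat.pow_le_pow_right (by norm_num) (by omega)
    rw [ha]; exact_mod_cast le_trans h2' h1
  have haε : (2:ℝ) ≤ a ^ ε := by
    have h1 : ((2:ℝ)^(K:ℕ)) ^ ε ≤ a ^ ε := Real.rpow_le_rpow (by positivity) haK hε.le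
    have h2' : (2:ℝ) ≤ ((2:ℝ)^(K:ℕ)) ^ ε := by
      rw [← Real.rpow_natCast 2 K, ← Real.rpow_mul (by norm_num)]
      calc (2:ℝ) = 2 ^ (1:ℝ) := (Real.rpow_one 2).symm
        _ ≤ 2 ^ ((K:ℝ) * ε) := Real.rpow_le_rpow_of_exponent_le (by norm_num) hKε
    exact le_trans h2' h1
  have hfinal : 2 / a ^ ((5:ℝ)/2) ≤ a ^ (-(5/2 - ε)) := by
    have heq : a ^ (-(5/2 - ε)) = a ^ ε / a ^ ((5:ℝ)/2) := by
      rw [← Real.rpow_sub ha0]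
      congr 1
      ring
    rw [heq]
    exact (div_le_div_iff_of_pos_right (Real.rpow_pos_of_pos ha0 _)).mpr haε
  calc (∑' j : ℕ, (1:ℝ) / x (n+1+j)) ≤ 2 / (x (n+1):ℝ) := htsum
    _ < 2 / a ^ ((5:ℝ)/2) := hstep
    _ ≤ a ^ (-(5/2 - ε)) := hfinal
end
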